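/- arXiv:2402.00685 — 2 statements merged into one kernel-verified Lean document; each statement's English description precedes it below -/
import Mathlib

section
/- Let d ≥ 1 and let H : ℝ^d → ℝ be convex, Lipschitz continuous with Lipschitz constant L ≥ 0, and differentiable everywhere with gradient ∇H : ℝ^d → ℝ^d Lipschitz continuous with Lipschitz constant L' ≥ 0. Then for every γ ∈ [0,1] and all p, q ∈ ℝ^d one has 0 ≤ H(p) − H(q) − ⟨∇H(q), p − q⟩ ≤ (2L)^{1−γ} (L')^{γ} ‖p − q‖^{1+γ}. -/
open scoped RealInnerProductSpace

/-!
The residual `f p - f q - ⟪∇f q, p - q⟫` is nonnegative by the first-order characterisation of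
convexity. It is at most `2L‖p - q‖` because `‖∇f‖ ≤ L`, and at most `⟪∇f p - ∇f q, p - q⟫
≤ L'‖p - q‖²` by the gradient inequality at `p`. Any `x ≥ 0` below both `a` and `b` lies below
`a ^ (1 - γ) * b ^ γ`.
-/

open Real

theorem ConvexOn.hasFDerivAt_le_sub {E : Type*} [NormedAddCommGroup E] [NormedSpace ℝ E]
    {f : E → ℝ} {f' : E →L[ℝ] ℝ} {x : E} (hf : ConvexOn ℝ Set.univ f) (hf' : HasFDerivAt f f' x)
    (y : E) : f' (y - x) ≤ f y - f x := by
  have hline : ConvexOn ℝ Set.univ (f ∘ (AffineMap.lineMap x y : ℝ →ᵃ[ℝ] E)) := hf.comp_affineMap _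
  have hderiv : HasDerivAt (f ∘ (AffineMap.lineMap x y : ℝ →ᵃ[ℝ] E)) (f' (y - x)) 0 := by
    refine HasFDerivAt.comp_hasDerivAt (0 : ℝ) ?_ AffineMap.hasDerivAt_lineMap
    simpa using hf'
  simpa [slope_def_field] using
    hline.le_slope_of_hasDerivAt (Set.mem_univ 0) (Set.mem_univ 1) zero_lt_one hderiv

section Gradient

variable {E : Type*} [NormedAddCommGroup E] [InnerProductSpace ℝ E] [CompleteSpace E]
  {f : E → ℝ} {f' : E → E}

theorem ConvexOn.inner_gradient_le_sub (hf : ConvexOn ℝ Set.univ f) {x : E}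
    (hx : HasGradientAt f (f' x) x) (y : E) : ⟪f' x, y - x⟫ ≤ f y - f x := by
  simpa using hf.hasFDerivAt_le_sub hx.hasFDerivAt y

theorem HasGradientAt.norm_le_of_lipschitzWith {g x : E} {C : NNReal} (hg : HasGradientAt f g x)
    (hf : LipschitzWith C f) : ‖g‖ ≤ C := by
  simpa using hg.hasFDerivAt.le_of_lipschitz hf

theorem sub_sub_inner_le_two_mul {C : NNReal} (hf : LipschitzWith C f) {p q : E}
    (hq : HasGradientAt f (f' q) q) : f p - f q - ⟪f' q, p - q⟫ ≤ 2 * C * ‖p - q‖ := by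
  have hval : f p - f q ≤ C * ‖p - q‖ := by
    simpa [dist_eq_norm] using (le_abs_self _).trans (hf.dist_le_mul p q)
  have hinner : -⟪f' q, p - q⟫ ≤ C * ‖p - q‖ :=
    calc -⟪f' q, p - q⟫ ≤ ‖f' q‖ * ‖p - q‖ := by
          exact (neg_le_abs _).trans (abs_real_inner_le_norm _ _)
      _ ≤ C * ‖p - q‖ := by gcongr; exact hq.norm_le_of_lipschitzWith hf
  linarith

theorem ConvexOn.sub_sub_inner_le_inner_sub (hf : ConvexOn ℝ Set.univ f)
    (hgrad : ∀ x, HasGradientAt f (f' x) x) (p q : E) :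
    f p - f q - ⟪f' q, p - q⟫ ≤ ⟪f' p - f' q, p - q⟫ := by
  have h := hf.inner_gradient_le_sub (hgrad p) q
  rw [← neg_sub p q, inner_neg_right] at h
  rw [inner_sub_left]
  linarith

theorem ConvexOn.sub_sub_inner_le_mul_sq (hf : ConvexOn ℝ Set.univ f)
    (hgrad : ∀ x, HasGradientAt f (f' x) x) {C : ℝ} (hlip : ∀ p q, ‖f' p - f' q‖ ≤ C * ‖p - q‖)
    (p q : E) : f p - f q - ⟪f' q, p - q⟫ ≤ C * ‖p - q‖ ^ 2 :=
  calc f p - f q - ⟪f' q, p - q⟫ ≤ ⟪f' p - f' q, p - q⟫ := hf.sub_sub_inner_le_inner_sub hgrad p q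
    _ ≤ ‖f' p - f' q‖ * ‖p - q‖ := real_inner_le_norm _ _
    _ ≤ C * ‖p - q‖ * ‖p - q‖ := by gcongr; exact hlip p q
    _ = C * ‖p - q‖ ^ 2 := by ring

end Gradient

theorem Real.le_rpow_mul_rpow_of_le_of_le {x a b γ : ℝ} (hx : 0 ≤ x) (hγ₀ : 0 ≤ γ) (hγ₁ : γ ≤ 1)
    (ha : x ≤ a) (hb : x ≤ b) : x ≤ a ^ (1 - γ) * b ^ γ :=
  calc x = x ^ (1 - γ) * x ^ γ := by
        rw [← rpow_add' hx (by simp), sub_add_cancel, rpow_one]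
    _ ≤ a ^ (1 - γ) * b ^ γ := by
        have := rpow_nonneg (hx.trans ha) (1 - γ)
        gcongr

theorem Real.le_mul_rpow_of_le_mul_of_le_mul_sq {x A B r γ : ℝ} (hx : 0 ≤ x) (hA : 0 ≤ A)
    (hB : 0 ≤ B) (hr : 0 ≤ r) (hγ₀ : 0 ≤ γ) (hγ₁ : γ ≤ 1) (h₁ : x ≤ A * r) (h₂ : x ≤ B * r ^ 2) :
    x ≤ A ^ (1 - γ) * B ^ γ * r ^ (1 + γ) :=
  calc x ≤ (A * r) ^ (1 - γ) * (B * r ^ 2) ^ γ := le_rpow_mul_rpow_of_le_of_le hx hγ₀ hγ₁ h₁ h₂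
    _ = A ^ (1 - γ) * B ^ γ * r ^ (1 + γ) := by
        rw [mul_rpow hA hr, mul_rpow hB (by positivity), ← rpow_natCast_mul hr,
          show 1 + γ = (1 - γ) + (2 : ℕ) * γ by push_cast; ring, rpow_add' hr (by push_cast; linarith)]
        ring

theorem convex_interpolated_residual_bound_general
    (d : ℕ)
    (H : EuclideanSpace ℝ (Fin d) → ℝ) (H' : EuclideanSpace ℝ (Fin d) → EuclideanSpace ℝ (Fin d))
    (hconv : ConvexOn ℝ Set.univ H)
    (L L' : ℝ) (hL : 0 ≤ L) (hL' : 0 ≤ L')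
    (hlip : ∀ p q, |H p - H q| ≤ L * ‖p - q‖)
    (hgrad : ∀ p, HasGradientAt H (H' p) p)
    (hgradlip : ∀ p q, ‖H' p - H' q‖ ≤ L' * ‖p - q‖) :
    ∀ γ ∈ Set.Icc (0 : ℝ) 1, ∀ p q : EuclideanSpace ℝ (Fin d),
      0 ≤ H p - H q - ⟪H' q, p - q⟫ ∧
      H p - H q - ⟪H' q, p - q⟫ ≤ (2 * L) ^ (1 - γ) * L' ^ γ * ‖p - q‖ ^ (1 + γ) := by
  rintro γ ⟨hγ₀, hγ₁⟩ p q
  have hLip : LipschitzWith L.toNNReal H := .of_dist_le_mul fun p q => by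
    simpa [Real.dist_eq, dist_eq_norm, hL] using hlip p q
  have hnonneg : 0 ≤ H p - H q - ⟪H' q, p - q⟫ :=
    sub_nonneg.2 (hconv.inner_gradient_le_sub (hgrad q) p)
  have hfirst : H p - H q - ⟪H' q, p - q⟫ ≤ 2 * L * ‖p - q‖ := by
    simpa [hL] using sub_sub_inner_le_two_mul hLip (hgrad q) (p := p)
  exact ⟨hnonneg, le_mul_rpow_of_le_mul_of_le_mul_sq hnonneg (by positivity) hL' (norm_nonneg _)
    hγ₀ hγ₁ hfirst (hconv.sub_sub_inner_le_mul_sq hgrad hgradlip p q)⟩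

/-- Interpolated residual bound for a convex Lipschitz Hamiltonian with Lipschitz gradient:
for `γ ∈ [0,1]`, `0 ≤ H(p) − H(q) − ⟪∇H(q), p − q⟫ ≤ (2L)^{1−γ} (L')^{γ} ‖p − q‖^{1+γ}`. -/
theorem convex_interpolated_residual_bound
    (d : ℕ) (hd : 1 ≤ d)
    (H : EuclideanSpace ℝ (Fin d) → ℝ) (H' : EuclideanSpace ℝ (Fin d) → EuclideanSpace ℝ (Fin d))
    (hconv : ConvexOn ℝ Set.univ H)
    (L L' : ℝ) (hL : 0 ≤ L) (hL' : 0 ≤ L')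
    (hlip : ∀ p q, |H p - H q| ≤ L * ‖p - q‖)
    (hgrad : ∀ p, HasGradientAt H (H' p) p)
    (hgradlip : ∀ p q, ‖H' p - H' q‖ ≤ L' * ‖p - q‖) :
    ∀ γ ∈ Set.Icc (0 : ℝ) 1, ∀ p q : EuclideanSpace ℝ (Fin d),
      0 ≤ H p - H q - ⟪H' q, p - q⟫ ∧
      H p - H q - ⟪H' q, p - q⟫ ≤ (2 * L) ^ (1 - γ) * L' ^ γ * ‖p - q‖ ^ (1 + γ) :=
  convex_interpolated_residual_bound_general d H H' hconv L L' hL hL' hlip hgrad hgradlip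
end

section
/- Let d ≥ 3, let Ω ⊂ ℝ^d be a bounded open set, and let H : ℝ^d → ℝ be convex, Lipschitz continuous with Lipschitz constant L ≥ 0, and differentiable everywhere with gradient ∇H : ℝ^d → ℝ^d Lipschitz continuous with Lipschitz constant L' ≥ 0. Then for every ε > 0 there exists R > 0, depending only on ε, d, Ω, L and L', such that for all smooth compactly supported functions v, w, φ : ℝ^d → ℝ whose supports are contained in Ω and which satisfy ‖v − w‖_{H¹} ≤ R, one has | ∫_{ℝ^d} ( H(∇v(x)) − H(∇w(x)) − ⟨∇H(∇w(x)), ∇v(x) − ∇w(x)⟩ ) φ(x) dx | ≤ ε · ‖v − w‖_{H¹} · ‖φ‖_{H¹}, where ‖u‖_{H¹} := ( ∫_{ℝ^d} |u(x)|² dx + ∫_{ℝ^d} ‖∇u(x)‖² dx )^{1/2}. -/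
open MeasureTheory
open scoped RealInnerProductSpace NNReal ENNReal

noncomputable def H1norm {d : ℕ} (u : EuclideanSpace ℝ (Fin d) → ℝ) : ℝ :=
  Real.sqrt ((∫ x, (u x) ^ 2) + ∫ x, ‖gradient u x‖ ^ 2)

section Aux

variable {E : Type*} [NormedAddCommGroup E] [InnerProductSpace ℝ E] [CompleteSpace E]

lemma gradient_inner_le_sub {H : E → ℝ} (hconv : ConvexOn ℝ Set.univ H)
    {q G : E} (hgrad : HasGradientAt H G q) (p : E) :
    ⟪G, p - q⟫ ≤ H p - H q := by
  set f : ℝ → ℝ := fun t => H ((AffineMap.lineMap q p : ℝ →ᵃ[ℝ] E) t) with hf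
  have hconvf : ConvexOn ℝ Set.univ f := by
    have := hconv.comp_affineMap (AffineMap.lineMap q p : ℝ →ᵃ[ℝ] E)
    exact this
  have hline : HasDerivAt (fun t : ℝ => (AffineMap.lineMap q p : ℝ →ᵃ[ℝ] E) t) (p - q) 0 := by
    have h1 : HasDerivAt (fun t : ℝ => t • (p - q) + q) ((1:ℝ) • (p - q)) 0 :=
      ((hasDerivAt_id (0:ℝ)).smul_const (p - q)).add_const q
    simp only [one_smul] at h1
    have heq : (fun t : ℝ => (AffineMap.lineMap q p : ℝ →ᵃ[ℝ] E) t)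
        = fun t : ℝ => t • (p - q) + q := by
      funext t
      simp [AffineMap.lineMap_apply_module]
      module
    rw [heq]
    exact h1
  have hF : HasFDerivAt H (InnerProductSpace.toDual ℝ E G) q :=
    hasGradientAt_iff_hasFDerivAt.mp hgrad
  have hder : HasDerivAt f ⟪G, p - q⟫ 0 := by
    have h0 : (AffineMap.lineMap q p : ℝ →ᵃ[ℝ] E) 0 = q := AffineMap.lineMap_apply_zero _ _
    have hF' : HasFDerivAt H (InnerProductSpace.toDual ℝ E G)
        ((AffineMap.lineMap q p : ℝ →ᵃ[ℝ] E) 0) := by rw [h0]; exact hF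
    have := hF'.comp_hasDerivAt 0 hline
    simp [InnerProductSpace.toDual_apply_apply] at this
    exact this
  have hslope := hconvf.le_slope_of_hasDerivAt (Set.mem_univ (0:ℝ)) (Set.mem_univ 1)
    one_pos hder
  simpa [slope_def_field, hf] using hslope


lemma norm_grad_le_of_lipschitz {H : E → ℝ} (hconv : ConvexOn ℝ Set.univ H)
    {L : ℝ} (hL : 0 ≤ L) (hlip : ∀ p q, |H p - H q| ≤ L * ‖p - q‖)
    {q G : E} (hgrad : HasGradientAt H G q) : ‖G‖ ≤ L := by
  have h1 := gradient_inner_le_sub hconv hgrad (q + G)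
  simp only [add_sub_cancel_left] at h1
  have h2 : H (q + G) - H q ≤ L * ‖G‖ := by
    have := hlip (q + G) q
    simp only [add_sub_cancel_left] at this
    exact (le_abs_self _).trans this
  have h3 : ‖G‖ ^ 2 ≤ L * ‖G‖ := by
    rw [← real_inner_self_eq_norm_sq]
    exact h1.trans h2
  rcases (norm_nonneg G).eq_or_lt with h | h
  · rw [← h]; exact hL
  · nlinarith


lemma gradient_eq_fderiv (f : E → ℝ) (x : E) :
    gradient f x = (InnerProductSpace.toDual ℝ E).symm (fderiv ℝ f x) := rfl

lemma norm_gradient_eq (f : E → ℝ) (x : E) : ‖gradient f x‖ = ‖fderiv ℝ f x‖ := by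
  rw [gradient_eq_fderiv]; exact LinearIsometryEquiv.norm_map _ _

lemma continuous_gradient {f : E → ℝ} (hf : ContDiff ℝ (⊤ : ℕ∞) f) :
    Continuous (gradient f) := by
  have h : gradient f = fun x => (InnerProductSpace.toDual ℝ E).symm (fderiv ℝ f x) := rfl
  rw [h]
  exact (InnerProductSpace.toDual ℝ E).symm.continuous.comp (hf.continuous_fderiv (by simp))

lemma hasCompactSupport_gradient {f : E → ℝ} (hf : HasCompactSupport f) :
    HasCompactSupport (gradient f) := by
  have h1 : HasCompactSupport (fderiv ℝ f) := hf.fderiv (𝕜 := ℝ)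
  have h2 := h1.comp_left (g := (InnerProductSpace.toDual ℝ E).symm) (map_zero _)
  exact h2

lemma gradient_sub' {f g : E → ℝ} {x : E} (hf : DifferentiableAt ℝ f x)
    (hg : DifferentiableAt ℝ g x) :
    gradient (f - g) x = gradient f x - gradient g x := by
  simp only [gradient_eq_fderiv]
  have h : f - g = fun y => f y - g y := rfl
  rw [h, fderiv_fun_sub hf hg, map_sub]

end Aux

set_option maxHeartbeats 1000000 in
/-- Lemma 2.1 of the paper (semismoothness-type estimate for the HJB operator): for every
`ε > 0` there is `R > 0` such that the linearization residual of the Hamiltonian, tested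
against `φ`, is bounded by `ε ‖v − w‖_{H¹} ‖φ‖_{H¹}` whenever `‖v − w‖_{H¹} ≤ R`. -/
theorem hamiltonian_semismoothness
    (d : ℕ) (hd : 3 ≤ d)
    (Ω : Set (EuclideanSpace ℝ (Fin d))) (hΩopen : IsOpen Ω) (hΩbdd : Bornology.IsBounded Ω)
    (H : EuclideanSpace ℝ (Fin d) → ℝ) (H' : EuclideanSpace ℝ (Fin d) → EuclideanSpace ℝ (Fin d))
    (hconv : ConvexOn ℝ Set.univ H)
    (L L' : ℝ) (hL : 0 ≤ L) (hL' : 0 ≤ L')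
    (hlip : ∀ p q, |H p - H q| ≤ L * ‖p - q‖)
    (hgrad : ∀ p, HasGradientAt H (H' p) p)
    (hgradlip : ∀ p q, ‖H' p - H' q‖ ≤ L' * ‖p - q‖) :
    ∀ ε : ℝ, 0 < ε → ∃ R : ℝ, 0 < R ∧
      ∀ v w φ : EuclideanSpace ℝ (Fin d) → ℝ,
        ContDiff ℝ (⊤ : ℕ∞) v → HasCompactSupport v → tsupport v ⊆ Ω →
        ContDiff ℝ (⊤ : ℕ∞) w → HasCompactSupport w → tsupport w ⊆ Ω →
        ContDiff ℝ (⊤ : ℕ∞) φ → HasCompactSupport φ → tsupport φ ⊆ Ω →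
        H1norm (v - w) ≤ R →
        |∫ x, (H (gradient v x) - H (gradient w x) -
            ⟪H' (gradient w x), gradient v x - gradient w x⟫) * φ x| ≤
          ε * H1norm (v - w) * H1norm φ := by
  intro ε hε
  set D : ℝ := (d : ℝ) with hD
  have hD3 : (3:ℝ) ≤ D := by rw [hD]; exact_mod_cast hd
  have hD0 : (0:ℝ) < D := by linarith
  have hD2 : (2:ℝ) < D := by linarith
  have hne1 : D ≠ 0 := ne_of_gt hD0
  have hne2 : D - 2 ≠ 0 := by intro h0; nlinarith
  have hne3 : D + 2 ≠ 0 := by intro h0; nlinarith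
  set θ : ℝ := 2 / D with hθ
  have hθ0 : 0 < θ := by positivity
  have hθ1 : θ ≤ 1 := by rw [hθ, div_le_one hD0]; linarith
  set p : ℝ := 2 * D / (D + 2) with hp
  set q : ℝ := 2 * D / (D - 2) with hq
  have hq0 : (0:ℝ) < q := div_pos (by linarith) (by linarith)
  have hpq : p.HolderConjugate q := by
    refine ⟨?_, ?_, hq0⟩
    · rw [hp, hq, inv_div, inv_div]
      field_simp
      ring
    · rw [hp]; positivity
  set C : ℝ := (2*L)^(1-θ) * L'^θ with hC
  have hC0 : 0 ≤ C := mul_nonneg (Real.rpow_nonneg (by linarith) _) (Real.rpow_nonneg hL' _)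
  set K : ℝ≥0 :=
    eLpNormLESNormFDerivOfEqInnerConst (volume : Measure (EuclideanSpace ℝ (Fin d)))
      (((2:ℝ≥0)):ℝ) with hK
  set M : ℝ := C * (K:ℝ) + 1 with hM
  have hM0 : 0 < M := by positivity
  refine ⟨(ε / M) ^ (D/2), Real.rpow_pos_of_pos (by positivity) _, ?_⟩
  intro v w φ hv hvc hvΩ hw hwc hwΩ hφ hφc hφΩ hR
  -- basic objects
  have hu : ContDiff ℝ (⊤ : ℕ∞) (v - w) := hv.sub hw
  have huc : HasCompactSupport (v - w) := by
    have h : HasCompactSupport (fun x => v x - w x) :=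
      HasCompactSupport.comp₂_left hvc hwc (sub_zero 0)
    exact h
  have hvd : ∀ x, DifferentiableAt ℝ v x := fun x => (hv.differentiable (by simp)) x
  have hwd : ∀ x, DifferentiableAt ℝ w x := fun x => (hw.differentiable (by simp)) x
  have hgsub : ∀ x, gradient v x - gradient w x = gradient (v - w) x :=
    fun x => (gradient_sub' (hvd x) (hwd x)).symm
  set g : EuclideanSpace ℝ (Fin d) → ℝ := fun x => ‖gradient (v - w) x‖ with hg
  have hgnn : ∀ x, 0 ≤ g x := fun x => norm_nonneg _
  have hgcont : Continuous g := (continuous_gradient hu).norm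
  have hgcs : HasCompactSupport g := (hasCompactSupport_gradient huc).norm
  set r : EuclideanSpace ℝ (Fin d) → ℝ := fun x =>
    H (gradient v x) - H (gradient w x) -
      ⟪H' (gradient w x), gradient v x - gradient w x⟫ with hr
  -- continuity facts
  have hHcont : Continuous H := by
    rw [continuous_iff_continuousAt]
    exact fun x => ((hgrad x).differentiableAt).continuousAt
  have hH'cont : Continuous H' := by
    have : LipschitzWith L'.toNNReal H' :=
      LipschitzWith.of_dist_le_mul (fun a b => by
        simpa [dist_eq_norm, Real.coe_toNNReal _ hL'] using hgradlip a b)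
    exact this.continuous
  have hgv : Continuous (gradient v) := continuous_gradient hv
  have hgw : Continuous (gradient w) := continuous_gradient hw
  have hrcont : Continuous r := by
    apply Continuous.sub
    · exact (hHcont.comp hgv).sub (hHcont.comp hgw)
    · exact (hH'cont.comp hgw).inner (hgv.sub hgw)
  -- pointwise bounds
  have hr0 : ∀ x, 0 ≤ r x := by
    intro x
    have := gradient_inner_le_sub hconv (hgrad (gradient w x)) (gradient v x)
    simp only [hr]
    linarith
  have hrlin : ∀ x, r x ≤ 2 * L * g x := by
    intro x
    have h1 := hlip (gradient v x) (gradient w x)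
    have h2 : ‖H' (gradient w x)‖ ≤ L :=
      norm_grad_le_of_lipschitz hconv hL hlip (hgrad (gradient w x))
    have h3 := abs_real_inner_le_norm (H' (gradient w x)) (gradient v x - gradient w x)
    have h4 : ‖gradient v x - gradient w x‖ = g x := by rw [hgsub x]
    rw [h4] at h1 h3
    have h5 : |⟪H' (gradient w x), gradient v x - gradient w x⟫| ≤ L * g x :=
      h3.trans (mul_le_mul_of_nonneg_right h2 (hgnn x))
    simp only [hr]
    have h6 := le_abs_self (H (gradient v x) - H (gradient w x))
    have h7 := neg_abs_le (⟪H' (gradient w x), gradient v x - gradient w x⟫)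
    have h8 := abs_le.mp h5
    linarith
  have hrquad : ∀ x, r x ≤ L' * g x ^ 2 := by
    intro x
    have h1 := gradient_inner_le_sub hconv (hgrad (gradient v x)) (gradient w x)
    have h2 : H (gradient v x) - H (gradient w x) ≤
        ⟪H' (gradient v x), gradient v x - gradient w x⟫ := by
      have : ⟪H' (gradient v x), gradient w x - gradient v x⟫ =
          -⟪H' (gradient v x), gradient v x - gradient w x⟫ := by
        rw [← inner_neg_right]; congr 1; abel
      rw [this] at h1
      linarith
    have h3 : r x ≤ ⟪H' (gradient v x) - H' (gradient w x),
        gradient v x - gradient w x⟫ := by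
      simp only [hr, inner_sub_left]
      linarith
    have h4 := real_inner_le_norm (H' (gradient v x) - H' (gradient w x))
      (gradient v x - gradient w x)
    have h5 := hgradlip (gradient v x) (gradient w x)
    have h6 : ‖gradient v x - gradient w x‖ = g x := by rw [hgsub x]
    rw [h6] at h4 h5
    calc r x ≤ _ := h3
      _ ≤ ‖H' (gradient v x) - H' (gradient w x)‖ * g x := h4
      _ ≤ (L' * g x) * g x := mul_le_mul_of_nonneg_right h5 (hgnn x)
      _ = L' * g x ^ 2 := by ring
  have hkey : ∀ x, |r x * φ x| ≤ C * g x ^ (1 + θ) * |φ x| := by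
    intro x
    rw [abs_mul, abs_of_nonneg (hr0 x)]
    have hgoal : r x ≤ C * g x ^ (1 + θ) := by
      rcases (hr0 x).eq_or_lt with h | h
      · rw [← h]; positivity
      · have e1 : r x = r x ^ (1 - θ) * r x ^ θ := by
          rw [← Real.rpow_add h, sub_add_cancel, Real.rpow_one]
        have e2 : r x ^ (1 - θ) ≤ (2 * L * g x) ^ (1 - θ) :=
          Real.rpow_le_rpow (hr0 x) (hrlin x) (by linarith)
        have e3 : r x ^ θ ≤ (L' * g x ^ 2) ^ θ :=
          Real.rpow_le_rpow (hr0 x) (hrquad x) hθ0.le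
        have e4 : (2 * L * g x) ^ (1 - θ) * (L' * g x ^ 2) ^ θ
            = C * g x ^ (1 + θ) := by
          have egθ : ((g x ^ 2 : ℝ)) ^ θ = g x ^ (2 * θ) := by
            rw [← Real.rpow_natCast (g x) 2, ← Real.rpow_mul (hgnn x)]
            norm_num
          have esum : g x ^ (1 - θ) * g x ^ (2 * θ) = g x ^ (1 + θ) := by
            rw [← Real.rpow_add' (hgnn x) (by intro h0; nlinarith : (1 - θ) + 2 * θ ≠ 0)]
            ring_nf
          rw [Real.mul_rpow (by linarith : (0:ℝ) ≤ 2 * L) (hgnn x),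
            Real.mul_rpow hL' (sq_nonneg _), egθ]
          calc (2 * L) ^ (1 - θ) * g x ^ (1 - θ) * (L' ^ θ * g x ^ (2 * θ))
              = ((2 * L) ^ (1 - θ) * L' ^ θ) * (g x ^ (1 - θ) * g x ^ (2 * θ)) := by ring
            _ = C * g x ^ (1 + θ) := by rw [← hC, esum]
        calc r x = r x ^ (1 - θ) * r x ^ θ := e1
          _ ≤ (2 * L * g x) ^ (1 - θ) * (L' * g x ^ 2) ^ θ :=
            mul_le_mul e2 e3 (Real.rpow_nonneg (hr0 x) _) (Real.rpow_nonneg (by positivity) _)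
          _ = C * g x ^ (1 + θ) := e4
    exact mul_le_mul_of_nonneg_right hgoal (abs_nonneg _)
  -- integrability
  have hrφcont : Continuous (fun x => r x * φ x) := hrcont.mul hφ.continuous
  have hrφcs : HasCompactSupport (fun x => r x * φ x) := by
    have h : HasCompactSupport ((fun x => r x) * φ) := hφc.mul_left
    exact h
  have hint1 : Integrable (fun x => r x * φ x) := hrφcont.integrable_of_hasCompactSupport hrφcs
  have hgθcont : Continuous (fun x => g x ^ (1 + θ)) :=
    hgcont.rpow_const (fun x => Or.inr (by linarith))
  have hgθcs : HasCompactSupport (fun x => g x ^ (1 + θ)) := by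
    have h := hgcs.comp_left (g := fun t : ℝ => t ^ (1 + θ)) (Real.zero_rpow (by positivity))
    exact h
  have hφabs_cont : Continuous (fun x => |φ x|) := hφ.continuous.abs
  have hφabs_cs : HasCompactSupport (fun x => |φ x|) := hφc.abs
  have hF1cont : Continuous (fun x => C * g x ^ (1 + θ) * |φ x|) :=
    (continuous_const.mul hgθcont).mul hφabs_cont
  have hF1cs : HasCompactSupport (fun x => C * g x ^ (1 + θ) * |φ x|) := by
    have h : HasCompactSupport ((fun x => C * g x ^ (1 + θ)) * fun x => |φ x|) :=
      hφabs_cs.mul_left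
    exact h
  have hF1int : Integrable (fun x => C * g x ^ (1 + θ) * |φ x|) :=
    hF1cont.integrable_of_hasCompactSupport hF1cs
  -- MemLp facts
  have hmem1 : MemLp (fun x => g x ^ (1 + θ)) (ENNReal.ofReal p) volume :=
    hgθcont.memLp_of_hasCompactSupport hgθcs
  have hmem2 : MemLp (fun x => |φ x|) (ENNReal.ofReal q) volume :=
    hφabs_cont.memLp_of_hasCompactSupport hφabs_cs
  -- Hölder
  have hholder := integral_mul_le_Lp_mul_Lq_of_nonneg (μ := volume) hpq
    (Filter.Eventually.of_forall fun x => Real.rpow_nonneg (hgnn x) _)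
    (Filter.Eventually.of_forall fun x => abs_nonneg _) hmem1 hmem2
  -- H¹ facts
  set A : ℝ := H1norm (v - w) with hA
  set B : ℝ := H1norm φ with hB
  have hA0 : 0 ≤ A := Real.sqrt_nonneg _
  have hB0 : 0 ≤ B := Real.sqrt_nonneg _
  have hA2 : A ^ 2 = (∫ x, ((v - w) x) ^ 2) + ∫ x, ‖gradient (v - w) x‖ ^ 2 := by
    rw [hA, H1norm, Real.sq_sqrt]
    exact add_nonneg (integral_nonneg fun x => sq_nonneg _)
      (integral_nonneg fun x => sq_nonneg _)
  have hB2 : B ^ 2 = (∫ x, (φ x) ^ 2) + ∫ x, ‖gradient φ x‖ ^ 2 := by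
    rw [hB, H1norm, Real.sq_sqrt]
    exact add_nonneg (integral_nonneg fun x => sq_nonneg _)
      (integral_nonneg fun x => sq_nonneg _)
  have hsA : ∫ x, g x ^ 2 ≤ A ^ 2 := by
    rw [hA2]
    have h1 : 0 ≤ ∫ x, ((v - w) x) ^ 2 := integral_nonneg fun x => sq_nonneg _
    simp only [hg]
    linarith
  -- first Hölder factor
  have hgp_eq : ∀ x : EuclideanSpace ℝ (Fin d), (g x ^ (1 + θ)) ^ p = g x ^ 2 := by
    intro x
    have h1 : (g x ^ (1 + θ)) ^ p = g x ^ ((1 + θ) * p) := (Real.rpow_mul (hgnn x) _ _).symm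
    have h2 : (1 + θ) * p = ((2:ℕ):ℝ) := by
      rw [hθ, hp]
      push_cast
      field_simp
    rw [h1, h2, Real.rpow_natCast]
  have hfac1 : (∫ x, (g x ^ (1 + θ)) ^ p) ^ (1/p) ≤ (ε / M) * A := by
    have h1 : (∫ x, (g x ^ (1 + θ)) ^ p) = ∫ x, g x ^ 2 := by
      exact integral_congr_ae (Filter.Eventually.of_forall fun x => hgp_eq x)
    rw [h1]
    have h2 : (∫ x, g x ^ 2) ^ (1/p) ≤ (A ^ 2 : ℝ) ^ (1/p) :=
      Real.rpow_le_rpow (integral_nonneg fun x => sq_nonneg _) hsA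
        (by positivity)
    have h3 : (A ^ 2 : ℝ) ^ (1/p) = A * A ^ θ := by
      rw [← Real.rpow_natCast A 2, ← Real.rpow_mul hA0]
      have he : ((2:ℕ):ℝ) * (1/p) = 1 + θ := by
        rw [hp, hθ]
        push_cast
        field_simp
      rw [he, Real.rpow_add' hA0 (by positivity), Real.rpow_one]
    have h4 : A ^ θ ≤ ε / M := by
      calc A ^ θ ≤ ((ε / M) ^ (D/2)) ^ θ := Real.rpow_le_rpow hA0 hR hθ0.le
        _ = (ε / M) ^ ((D/2) * θ) := (Real.rpow_mul (by positivity) _ _).symm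
        _ = ε / M := by
            rw [show (D/2) * θ = 1 by rw [hθ]; field_simp]
            exact Real.rpow_one _
    calc (∫ x, g x ^ 2) ^ (1/p) ≤ (A ^ 2 : ℝ) ^ (1/p) := h2
      _ = A * A ^ θ := h3
      _ ≤ A * (ε / M) := mul_le_mul_of_nonneg_left h4 hA0
      _ = (ε / M) * A := mul_comm _ _
  -- second Hölder factor, via the Sobolev inequality
  have hfac2 : (∫ x, |φ x| ^ q) ^ (1/q) ≤ (K:ℝ) * B := by
    set q' : ℝ≥0 := q.toNNReal with hq'
    have hq'c : (q' : ℝ) = q := Real.coe_toNNReal _ hq0.le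
    have hq'0 : q' ≠ 0 := by
      rw [← NNReal.coe_ne_zero, hq'c]; exact ne_of_gt hq0
    have hφmem : MemLp φ ((q' : ℝ≥0∞)) volume :=
      hφ.continuous.memLp_of_hasCompactSupport hφc
    have hfdmem : MemLp (fderiv ℝ φ) (((2:ℝ≥0)) : ℝ≥0∞) volume :=
      (hφ.continuous_fderiv (by simp)).memLp_of_hasCompactSupport (hφc.fderiv (𝕜 := ℝ))
    have hn : 0 < Module.finrank ℝ (EuclideanSpace ℝ (Fin d)) := by
      rw [finrank_euclideanSpace_fin]; omega
    have hcond : ((q' : ℝ))⁻¹ = (((2:ℝ≥0)):ℝ)⁻¹ -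
        ((Module.finrank ℝ (EuclideanSpace ℝ (Fin d)) : ℝ))⁻¹ := by
      rw [hq'c, finrank_euclideanSpace_fin, hq]
      push_cast
      rw [inv_div]
      field_simp
      rw [hD]; ring
    have hsob := eLpNorm_le_eLpNorm_fderiv_of_eq_inner
      (μ := (volume : Measure (EuclideanSpace ℝ (Fin d))))
      (hφ.of_le (by simp)) hφc (p := 2) (p' := q') (by norm_num) hn hcond
    have htr : ((q' : ℝ≥0∞)).toReal = q := by rw [ENNReal.coe_toReal, hq'c]
    have hL1 : eLpNorm φ (q' : ℝ≥0∞) volume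
        = ENNReal.ofReal ((∫ x, ‖φ x‖ ^ q) ^ q⁻¹) := by
      rw [hφmem.eLpNorm_eq_integral_rpow_norm (by exact_mod_cast hq'0) ENNReal.coe_ne_top,
        htr]
    have hL2 : eLpNorm (fderiv ℝ φ) (((2:ℝ≥0)) : ℝ≥0∞) volume
        = ENNReal.ofReal ((∫ x, ‖fderiv ℝ φ x‖ ^ (2:ℝ)) ^ ((2:ℝ))⁻¹) := by
      rw [hfdmem.eLpNorm_eq_integral_rpow_norm (by norm_num) ENNReal.coe_ne_top]
      norm_num
    have hY : (∫ x, ‖fderiv ℝ φ x‖ ^ (2:ℝ)) ^ ((2:ℝ))⁻¹ ≤ B := by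
      have e1 : ∫ x, ‖fderiv ℝ φ x‖ ^ (2:ℝ) = ∫ x, ‖gradient φ x‖ ^ 2 := by
        congr 1
        funext x
        rw [← norm_gradient_eq, show ((2:ℝ)) = ((2:ℕ):ℝ) by norm_num, Real.rpow_natCast]
      rw [e1]
      have e2 : ∫ x, ‖gradient φ x‖ ^ 2 ≤ B ^ 2 := by
        have hnn : (0:ℝ) ≤ ∫ x, (φ x) ^ 2 := integral_nonneg fun x => sq_nonneg _
        rw [hB2]
        linarith
      calc (∫ x, ‖gradient φ x‖ ^ 2) ^ ((2:ℝ))⁻¹ ≤ (B ^ 2 : ℝ) ^ ((2:ℝ))⁻¹ :=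
          Real.rpow_le_rpow (integral_nonneg fun x => sq_nonneg _) e2 (by norm_num)
        _ = B := by
          rw [← Real.rpow_natCast B 2, ← Real.rpow_mul hB0]
          norm_num
    rw [hL1, hL2] at hsob
    rw [show ((K : ℝ≥0∞)) = ENNReal.ofReal (K:ℝ) from ENNReal.ofReal_coe_nnreal.symm,
      ← ENNReal.ofReal_mul (K.coe_nonneg)] at hsob
    have hle := (ENNReal.ofReal_le_ofReal_iff
      (mul_nonneg K.coe_nonneg (Real.rpow_nonneg
        (integral_nonneg fun x => Real.rpow_nonneg (norm_nonneg _) _) _))).mp hsob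
    have heq : (∫ x, |φ x| ^ q) ^ (1/q) = (∫ x, ‖φ x‖ ^ q) ^ q⁻¹ := by
      simp [Real.norm_eq_abs, one_div]
    calc (∫ x, |φ x| ^ q) ^ (1/q) = (∫ x, ‖φ x‖ ^ q) ^ q⁻¹ := heq
      _ ≤ (K:ℝ) * ((∫ x, ‖fderiv ℝ φ x‖ ^ (2:ℝ)) ^ ((2:ℝ))⁻¹) := hle
      _ ≤ (K:ℝ) * B := mul_le_mul_of_nonneg_left hY K.coe_nonneg
  -- put everything together
  have hAB : 0 ≤ A * B := mul_nonneg hA0 hB0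
  calc |∫ x, r x * φ x| ≤ ∫ x, |r x * φ x| := by
        simpa only [Real.norm_eq_abs] using
          norm_integral_le_integral_norm (μ := volume) (fun x => r x * φ x)
    _ ≤ ∫ x, C * g x ^ (1 + θ) * |φ x| := integral_mono hint1.abs hF1int hkey
    _ = C * ∫ x, g x ^ (1 + θ) * |φ x| := by
        simp_rw [mul_assoc]
        exact integral_const_mul _ _
    _ ≤ C * ((∫ x, (g x ^ (1 + θ)) ^ p) ^ (1/p) * (∫ x, |φ x| ^ q) ^ (1/q)) :=
        mul_le_mul_of_nonneg_left hholder hC0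
    _ ≤ C * (((ε / M) * A) * ((K:ℝ) * B)) := by
        refine mul_le_mul_of_nonneg_left ?_ hC0
        refine mul_le_mul hfac1 hfac2 ?_ ?_
        · exact Real.rpow_nonneg
            (integral_nonneg fun x => Real.rpow_nonneg (abs_nonneg _) _) _
        · exact mul_nonneg (div_nonneg hε.le hM0.le) hA0
    _ ≤ ε * A * B := by
        have h1 : C * (K:ℝ) ≤ M := by rw [hM]; linarith
        have h2 : C * (((ε / M) * A) * ((K:ℝ) * B)) = (C * (K:ℝ)) * ((ε/M) * (A*B)) := by
          ring
        rw [h2]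
        calc (C * (K:ℝ)) * ((ε/M) * (A*B)) ≤ M * ((ε/M) * (A*B)) :=
            mul_le_mul_of_nonneg_right h1
              (mul_nonneg (div_nonneg hε.le hM0.le) hAB)
          _ = ε * A * B := by
            field_simp
end
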